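/- arXiv:2204.12295 — 4 statements merged into one kernel-verified Lean document; each statement's English description precedes it below -/
import Mathlib

section
/- Strong Liouville property for the discrete ∞-laplacian: Let d ≥ 1. If u : ℤ^d → ℝ is nonnegative and satisfies u(x) = (1/2)·( max_{1≤i≤2d} u(x+e_i) + min_{1≤i≤2d} u(x+e_i) ) for every x ∈ ℤ^d, then u is constant. -/
/-- The `2d` lattice directions on `ℤ^d`: for `j < d` this is the standard basis
vector `e_j`, and for `d ≤ j < 2d` it is `-e_{j-d}`. -/
def nbr (d : ℕ) (j : Fin (2 * d)) : Fin d → ℤ :=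
  fun i => if (j : ℕ) = (i : ℕ) then 1 else if (j : ℕ) = (i : ℕ) + d then -1 else 0

/-- `u : ℤ^d → ℝ` is `F`-harmonic if `u x = F (u (x+e_1), …, u (x+e_{2d}))` for all `x`. -/
def IsFHarmonic (d : ℕ) (F : (Fin (2 * d) → ℝ) → ℝ) (u : (Fin d → ℤ) → ℝ) : Prop :=
  ∀ x : Fin d → ℤ, u x = F fun j => u fun i => x i + nbr d j i

/-- Strong Liouville property for the discrete ∞-laplacian on `ℤ^d`. -/
theorem liouville_infinity_laplacian (d : ℕ) (hd : 0 < d) (u : (Fin d → ℤ) → ℝ)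
    (hu : ∀ x, 0 ≤ u x)
    (hharm : ∀ x : Fin d → ℤ,
      u x = (1 / 2) *
        (Finset.univ.sup' ⟨⟨0, by omega⟩, Finset.mem_univ _⟩
            (fun j : Fin (2 * d) => u fun i => x i + nbr d j i) +
          Finset.univ.inf' ⟨⟨0, by omega⟩, Finset.mem_univ _⟩
            (fun j : Fin (2 * d) => u fun i => x i + nbr d j i))) :
    ∀ x y : Fin d → ℤ, u x = u y := by
  have h2d : 0 < 2 * d := by omega
  have hne : (Finset.univ : Finset (Fin (2 * d))).Nonempty :=
    ⟨⟨0, h2d⟩, Finset.mem_univ _⟩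
  set nb : (Fin d → ℤ) → Fin (2 * d) → (Fin d → ℤ) :=
    fun x j i => x i + nbr d j i with hnb
  set Ms : (Fin d → ℤ) → ℝ := fun x => Finset.univ.sup' hne (fun j => u (nb x j)) with hMs
  set ms : (Fin d → ℤ) → ℝ := fun x => Finset.univ.inf' hne (fun j => u (nb x j)) with hms
  -- rewrite harmonicity
  have hharm' : ∀ x, u x = (1 / 2) * (Ms x + ms x) := fun x => hharm x
  -- bounds
  have hle : ∀ x j, ms x ≤ u (nb x j) := fun x j =>
    Finset.inf'_le _ (Finset.mem_univ j)
  have hge : ∀ x j, u (nb x j) ≤ Ms x := fun x j =>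
    Finset.le_sup' (fun j => u (nb x j)) (Finset.mem_univ j)
  have hmM : ∀ x, ms x ≤ Ms x := fun x => le_trans (hle x ⟨0, h2d⟩) (hge x ⟨0, h2d⟩)
  have hmu : ∀ x, ms x ≤ u x := fun x => by
    have := hharm' x; have := hmM x; linarith
  have huM : ∀ x, u x ≤ Ms x := fun x => by
    have := hharm' x; have := hmM x; linarith
  -- neighbor symmetry
  have hsym : ∀ (x : Fin d → ℤ) (j : Fin (2 * d)), ∃ j' : Fin (2 * d),
      nb (nb x j) j' = x := by
    intro x j
    have hj := j.isLt
    by_cases h : (j : ℕ) < d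
    · refine ⟨⟨(j : ℕ) + d, by omega⟩, ?_⟩
      funext i
      have hi := i.isLt
      simp only [hnb, nbr, Fin.val_mk]
      split_ifs <;> omega
    · refine ⟨⟨(j : ℕ) - d, by omega⟩, ?_⟩
      funext i
      have hi := i.isLt
      simp only [hnb, nbr, Fin.val_mk]
      split_ifs <;> omega
  -- choose a minimizing neighbor
  have hminex : ∀ x : Fin d → ℤ, ∃ j : Fin (2 * d), ms x = u (nb x j) := by
    intro x
    obtain ⟨j, _, hj⟩ := Finset.exists_mem_eq_inf' hne (fun j => u (nb x j))
    exact ⟨j, hj⟩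
  choose jm hjm using hminex
  set f : (Fin d → ℤ) → (Fin d → ℤ) := fun x => nb x (jm x) with hf
  set S : (Fin d → ℤ) → ℝ := fun x => u x - ms x with hSdef
  have hS0 : ∀ x, 0 ≤ S x := fun x => by have := hmu x; simp [hSdef]; linarith
  have hstep1 : ∀ x, u (f x) = u x - S x := fun x => by
    simp only [hf, hSdef]; rw [← hjm x]; ring
  have hstep2 : ∀ x, S x ≤ S (f x) := by
    intro x
    obtain ⟨j', hj'⟩ := hsym x (jm x)
    have h1 : u x ≤ Ms (f x) := by
      have := hge (f x) j'
      rw [hf] at *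
      rw [hj'] at this
      exact this
    have h2 : S (f x) = Ms (f x) - u (f x) := by
      have := hharm' (f x); simp only [hSdef]; linarith
    have h3 := hstep1 x
    rw [h2, h3]; linarith
  -- iterate
  have hiter : ∀ (x : Fin d → ℤ) (n : ℕ),
      S x ≤ S (f^[n] x) ∧ u (f^[n] x) ≤ u x - n * S x := by
    intro x n
    induction n with
    | zero => simp
    | succ n ih =>
      rw [Function.iterate_succ_apply']
      constructor
      · exact le_trans ih.1 (hstep2 _)
      · have := hstep1 (f^[n] x)
        have h1 := ih.1
        have h2 := ih.2
        push_cast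
        linarith
  -- S vanishes
  have hSzero : ∀ x, S x = 0 := by
    intro x
    by_contra h
    have hpos : 0 < S x := lt_of_le_of_ne (hS0 x) (Ne.symm h)
    obtain ⟨n, hn⟩ := exists_nat_gt (u x / S x)
    have hn' : u x < n * S x := by
      rw [div_lt_iff₀ hpos] at hn; linarith
    have := (hiter x n).2
    have := hu (f^[n] x)
    linarith
  -- all neighbors equal
  have key : ∀ x j, u (nb x j) = u x := by
    intro x j
    have hms : ms x = u x := by have := hSzero x; simp [hSdef] at this; linarith
    have hMs : Ms x = u x := by have := hharm' x; linarith
    have := hle x j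
    have := hge x j
    rw [hms] at *
    rw [hMs] at *
    linarith
  -- path induction
  have main : ∀ (n : ℕ) (x y : Fin d → ℤ),
      (∑ i, (x i - y i).natAbs) = n → u x = u y := by
    intro n
    induction n with
    | zero =>
      intro x y h
      have hxy : x = y := by
        funext i
        have h0 : (x i - y i).natAbs = 0 := by
          have := Finset.sum_eq_zero_iff.mp h i (Finset.mem_univ i)
          exact this
        omega
      rw [hxy]
    | succ n ih =>
      intro x y h
      have hex : ∃ i : Fin d, (x i - y i).natAbs ≠ 0 := by
        by_contra hc
        push_neg at hc
        have : (∑ i, (x i - y i).natAbs) = 0 := Finset.sum_eq_zero fun i _ => hc i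
        omega
      obtain ⟨i, hi⟩ := hex
      have hixd := i.isLt
      set j : Fin (2 * d) :=
        if y i < x i then ⟨(i : ℕ), by omega⟩ else ⟨(i : ℕ) + d, by omega⟩ with hjdef
      have hjval : ∀ k : Fin d, nbr d j k = if (k : ℕ) = (i : ℕ) then
          (if y i < x i then 1 else -1) else 0 := by
        intro k
        have hk := k.isLt
        simp only [hjdef, nbr]
        by_cases h1 : y i < x i <;> simp only [h1, if_true, if_false] <;>
          split_ifs <;> omega
      set y' : Fin d → ℤ := nb y j with hy'
      have hyk : ∀ k : Fin d, k ≠ i → y' k = y k := by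
        intro k hk
        have : (k : ℕ) ≠ (i : ℕ) := fun hh => hk (Fin.ext hh)
        simp [hy', hnb, hjval k, this]
      have hyi : (x i - y' i).natAbs + 1 = (x i - y i).natAbs := by
        have := hjval i
        simp only [if_pos rfl] at this
        simp only [hy', hnb, this]
        by_cases h1 : y i < x i <;> simp only [h1, if_true, if_false] <;> omega
      have hsum : (∑ k, (x k - y' k).natAbs) = n := by
        have e1 : ∑ k, (x k - y k).natAbs
            = (x i - y i).natAbs + ∑ k ∈ Finset.univ.erase i, (x k - y k).natAbs := by
          exact (Finset.add_sum_erase _ _ (Finset.mem_univ i)).symm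
        have e2 : ∑ k, (x k - y' k).natAbs
            = (x i - y' i).natAbs + ∑ k ∈ Finset.univ.erase i, (x k - y' k).natAbs := by
          exact (Finset.add_sum_erase _ _ (Finset.mem_univ i)).symm
        have e3 : ∑ k ∈ Finset.univ.erase i, (x k - y' k).natAbs
            = ∑ k ∈ Finset.univ.erase i, (x k - y k).natAbs := by
          apply Finset.sum_congr rfl
          intro k hk
          rw [hyk k (Finset.ne_of_mem_erase hk)]
        rw [e2, e3]
        rw [e1] at h
        omega
      have huy' : u y' = u y := key y j
      rw [← huy']
      exact ih x y' hsum
  intro x y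
  exact main _ x y rfl
end

section
/- Strong Liouville property for discrete p-harmonic functions on ℤ²: Let 1 < p < ∞. If u : ℤ² → ℝ is nonnegative and satisfies Σ_{i=1}^{4} sign(u(x) − u(x+e_i))·|u(x) − u(x+e_i)|^{p−1} = 0 for every x ∈ ℤ², then u is constant. -/
/-- `signPow p s = sign(s) · |s|^(p-1)`, i.e. `s·|s|^(p-2)` for `s ≠ 0` and `0` for `s = 0`. -/
noncomputable def signPow (p s : ℝ) : ℝ := Real.sign s * |s| ^ (p - 1)

section SignPow

variable {p : ℝ}

@[simp] lemma signPow_zero (p : ℝ) : signPow p 0 = 0 := by simp [signPow]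

lemma signPow_neg (p t : ℝ) : signPow p (-t) = -signPow p t := by
  rw [signPow, signPow, Real.sign_neg, abs_neg, neg_mul]

lemma signPow_of_nonneg (hp : p ≠ 1) {t : ℝ} (ht : 0 ≤ t) : signPow p t = t ^ (p - 1) := by
  rcases ht.eq_or_lt with rfl | ht
  · rw [signPow_zero, Real.zero_rpow (sub_ne_zero.mpr hp)]
  · rw [signPow, Real.sign_of_pos ht, abs_of_pos ht, one_mul]

lemma signPow_mul_of_pos {c : ℝ} (hc : 0 < c) (t : ℝ) :
    signPow p (c * t) = c ^ (p - 1) * signPow p t := by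
  have hsign : Real.sign (c * t) = Real.sign t := by
    have hneg : c * t < 0 ↔ t < 0 :=
      ⟨fun h => by nlinarith, fun h => mul_neg_of_pos_of_neg hc h⟩
    simp only [Real.sign, hneg, mul_pos_iff_of_pos_left hc]
  rw [signPow, signPow, hsign, abs_mul, abs_of_pos hc, Real.mul_rpow hc.le (abs_nonneg t)]
  ring

lemma signPow_rpow_inv (hp : p ≠ 1) {c : ℝ} (hc : 0 ≤ c) :
    signPow p (c ^ (p - 1)⁻¹) = c := by
  rw [signPow_of_nonneg hp (by positivity), Real.rpow_inv_rpow hc (sub_ne_zero.mpr hp)]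

lemma signPow_surjective (hp : p ≠ 1) : Function.Surjective (signPow p) := by
  intro c
  rcases le_total 0 c with hc | hc
  · exact ⟨_, signPow_rpow_inv hp hc⟩
  · refine ⟨-(-c) ^ (p - 1)⁻¹, ?_⟩
    rw [signPow_neg, signPow_rpow_inv hp (neg_nonneg.mpr hc), neg_neg]

lemma signPow_strictMono (hp : 1 < p) : StrictMono (signPow p) :=
  strictMono_of_odd_strictMonoOn_nonneg (signPow_neg p) fun s hs t ht hst => by
    rw [signPow_of_nonneg hp.ne' hs, signPow_of_nonneg hp.ne' ht]
    exact Real.rpow_lt_rpow hs hst (sub_pos.mpr hp)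

lemma continuous_signPow (hp : 1 < p) : Continuous (signPow p) :=
  (signPow_strictMono hp).monotone.continuous_of_surjective (signPow_surjective hp.ne')

lemma signPow_add_signPow_pos (hp : 1 < p) {s t : ℝ} (h : 0 < s + t) :
    0 < signPow p s + signPow p t := by
  have := signPow_strictMono hp (show -t < s by linarith)
  rw [signPow_neg] at this
  linarith

lemma signPow_add_signPow_neg (hp : 1 < p) {s t : ℝ} (h : s + t < 0) :
    signPow p s + signPow p t < 0 := by
  have := signPow_add_signPow_pos hp (show 0 < -s + -t by linarith)
  rw [signPow_neg, signPow_neg] at this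
  linarith

end SignPow

section Lattice

variable {d : ℕ}

lemma exists_nbr_eq_neg (j : Fin (2 * d)) : ∃ j', nbr d j' = -nbr d j := by
  by_cases hj : (j : ℕ) < d
  · refine ⟨⟨j + d, by omega⟩, funext fun i => ?_⟩
    simp only [nbr, Pi.neg_apply]
    split_ifs <;> omega
  · refine ⟨⟨j - d, by omega⟩, funext fun i => ?_⟩
    simp only [nbr, Pi.neg_apply]
    split_ifs <;> omega

lemma closure_range_nbr : AddSubgroup.closure (Set.range (nbr d)) = ⊤ := by
  refine eq_top_iff.mpr fun x _ => ?_
  rw [pi_eq_sum_univ' x]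
  refine AddSubgroup.sum_mem _ fun i _ => ?_
  have hi : Pi.single i 1 = nbr d ⟨i, by omega⟩ := by
    funext k
    simp only [Pi.single_apply, nbr]
    split_ifs <;> first | rfl | omega
  rw [hi]
  exact AddSubgroup.zsmul_mem _ (AddSubgroup.subset_closure (Set.mem_range_self _)) _

@[elab_as_elim]
lemma nbr_induction {P : (Fin d → ℤ) → Prop} (zero : P 0)
    (step : ∀ x j, P x → P (x + nbr d j)) (y : Fin d → ℤ) : P y := by
  suffices h : ∀ x, P x → P (x + y) by simpa using h 0 zero
  have hy : y ∈ AddSubgroup.closure (Set.range (nbr d)) := closure_range_nbr ▸ trivial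
  induction hy using AddSubgroup.closure_induction'' with
  | mem _ hz =>
    obtain ⟨j, rfl⟩ := hz
    exact fun x => step x j
  | neg_mem _ hz =>
    obtain ⟨j, rfl⟩ := hz
    obtain ⟨j', hj'⟩ := exists_nbr_eq_neg j
    exact fun x => hj' ▸ step x j'
  | zero => simp
  | add y z _ _ hy hz => exact fun x hx => by simpa [add_assoc] using hz _ (hy x hx)

end Lattice

def IsPHarmonic (d : ℕ) (p : ℝ) (u : (Fin d → ℤ) → ℝ) : Prop :=
  ∀ x, ∑ j, signPow p (u x - u (x + nbr d j)) = 0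

namespace IsPHarmonic

variable {d : ℕ} {p : ℝ} {u v : (Fin d → ℤ) → ℝ}

lemma add_const (hu : IsPHarmonic d p u) (c : ℝ) : IsPHarmonic d p fun x => u x + c := by
  simpa [IsPHarmonic] using hu

lemma const_mul (hu : IsPHarmonic d p u) {c : ℝ} (hc : 0 < c) :
    IsPHarmonic d p fun x => c * u x := by
  intro x
  simp_rw [← mul_sub, signPow_mul_of_pos hc, ← Finset.mul_sum, hu x, mul_zero]

lemma comp_add_left (hu : IsPHarmonic d p u) (z : Fin d → ℤ) :
    IsPHarmonic d p fun x => u (z + x) := by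
  simpa [IsPHarmonic, add_assoc] using fun x => hu (z + x)

lemma isClosed_setOf (hp : 1 < p) : IsClosed {u : (Fin d → ℤ) → ℝ | IsPHarmonic d p u} := by
  simp only [IsPHarmonic, Set.ofPred_forall]
  refine isClosed_iInter fun x => isClosed_eq ?_ continuous_const
  exact continuous_finsetSum _ fun j _ =>
    (continuous_signPow hp).comp ((continuous_apply x).sub (continuous_apply _))

/-- Harnack's inequality across an edge: a large value at a neighbour makes its term in the
equation at `x` too negative for the other `2d - 1` terms, each at most `u x ^ (p - 1)`,
to compensate. -/
lemma harnack_nbr (hp : 1 < p) (hu : IsPHarmonic d p u) (hnn : ∀ x, 0 ≤ u x)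
    (x : Fin d → ℤ) (j : Fin (2 * d)) :
    u (x + nbr d j) ≤ (1 + (2 * d : ℝ) ^ (p - 1)⁻¹) * u x := by
  by_contra! hlt
  set A := u x ^ (p - 1)
  have hterm : ∀ k, signPow p (u x - u (x + nbr d k)) ≤ A := fun k =>
    ((signPow_strictMono hp).monotone (by linarith [hnn (x + nbr d k)])).trans_eq
      (signPow_of_nonneg hp.ne' (hnn x))
  have hj : signPow p (u x - u (x + nbr d j)) < -(2 * d * A) := by
    have hc : (0 : ℝ) ≤ 2 * d := by positivity
    rw [← signPow_rpow_inv hp.ne' (mul_nonneg hc (Real.rpow_nonneg (hnn x) _)), ← signPow_neg,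
      Real.mul_rpow hc (Real.rpow_nonneg (hnn x) _),
      Real.rpow_rpow_inv (hnn x) (sub_ne_zero.mpr hp.ne')]
    exact signPow_strictMono hp (by linarith)
  have hrest : ∑ k ∈ Finset.univ.erase j, signPow p (u x - u (x + nbr d k)) ≤ 2 * d * A :=
    calc _ ≤ ∑ k ∈ Finset.univ.erase j, A := Finset.sum_le_sum fun k _ => hterm k
      _ ≤ ∑ k : Fin (2 * d), A :=
        Finset.sum_le_sum_of_subset_of_nonneg (Finset.erase_subset _ _) fun _ _ _ =>
          Real.rpow_nonneg (hnn x) _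
      _ = 2 * d * A := by simp
  have := hu x
  rw [← Finset.add_sum_erase _ _ (Finset.mem_univ j)] at this
  linarith

lemma exists_harnack_bound (hp : 1 < p) (d : ℕ) (z : Fin d → ℤ) :
    ∃ C, ∀ u : (Fin d → ℤ) → ℝ, IsPHarmonic d p u → (∀ x, 0 ≤ u x) →
      ∀ x, u (x + z) ≤ C * u x := by
  induction z using nbr_induction with
  | zero => exact ⟨1, by simp⟩
  | step y j ih =>
    obtain ⟨C, hC⟩ := ih
    set K := 1 + (2 * d : ℝ) ^ (p - 1)⁻¹
    have hK : 0 ≤ K := by positivity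
    refine ⟨K * C, fun u hu hnn x => ?_⟩
    calc u (x + (y + nbr d j)) = u (x + y + nbr d j) := by rw [add_assoc]
      _ ≤ K * u (x + y) := hu.harnack_nbr hp hnn _ j
      _ ≤ K * (C * u x) := mul_le_mul_of_nonneg_left (hC u hu hnn x) hK
      _ = K * C * u x := by ring

lemma eq_of_le_of_eq (hp : 1 < p) (hu : IsPHarmonic d p u) (hv : IsPHarmonic d p v)
    (hle : ∀ x, v x ≤ u x) (h0 : u 0 = v 0) : u = v := by
  funext y
  induction y using nbr_induction with
  | zero => exact h0
  | step x j hx =>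
    have hterm : ∀ k ∈ Finset.univ,
        signPow p (u x - u (x + nbr d k)) ≤ signPow p (v x - v (x + nbr d k)) := fun k _ =>
      (signPow_strictMono hp).monotone (by linarith [hle (x + nbr d k)])
    have heq := (Finset.sum_eq_sum_iff_of_le hterm).mp ((hu x).trans (hv x).symm) j
      (Finset.mem_univ j)
    have := (signPow_strictMono hp).injective heq
    linarith

end IsPHarmonic

def normalizedPHarmonic (d : ℕ) (p : ℝ) : Set ((Fin d → ℤ) → ℝ) :=
  {u | IsPHarmonic d p u ∧ (∀ x, 0 ≤ u x) ∧ u 0 = 1}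

section Normalized

variable {d : ℕ} {p : ℝ}

lemma pos_of_mem_normalizedPHarmonic (hp : 1 < p) {u : (Fin d → ℤ) → ℝ}
    (hu : u ∈ normalizedPHarmonic d p) (x : Fin d → ℤ) : 0 < u x := by
  obtain ⟨C, hC⟩ := IsPHarmonic.exists_harnack_bound hp d (-x)
  have := hC u hu.1 hu.2.1 x
  rw [add_neg_cancel, hu.2.2] at this
  refine (hu.2.1 x).lt_of_ne fun h => ?_
  rw [← h, mul_zero] at this
  linarith

lemma isCompact_normalizedPHarmonic (hp : 1 < p) : IsCompact (normalizedPHarmonic d p) := by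
  choose C hC using fun x : Fin d → ℤ => IsPHarmonic.exists_harnack_bound hp d x
  have hsub : normalizedPHarmonic d p ⊆ Set.univ.pi fun x => Set.Icc 0 (C x) :=
    fun u ⟨hu, hnn, h0⟩ x _ => ⟨hnn x, by simpa [h0] using hC x u hu hnn 0⟩
  refine (isCompact_univ_pi fun x => isCompact_Icc).of_isClosed_subset ?_ hsub
  simp only [normalizedPHarmonic, Set.ofPred_and, Set.ofPred_forall]
  exact (IsPHarmonic.isClosed_setOf hp).inter
    ((isClosed_iInter fun x => isClosed_le continuous_const (continuous_apply x)).inter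
      (isClosed_eq (continuous_apply 0) continuous_const))

lemma normalize_mem_normalizedPHarmonic {u : (Fin d → ℤ) → ℝ} (hu : IsPHarmonic d p u)
    (hpos : ∀ x, 0 < u x) (z : Fin d → ℤ) :
    (fun x => (u z)⁻¹ * u (z + x)) ∈ normalizedPHarmonic d p :=
  ⟨(hu.comp_add_left z).const_mul (inv_pos.mpr (hpos z)),
    fun x => (mul_pos (inv_pos.mpr (hpos z)) (hpos _)).le,
    by simp [(hpos z).ne']⟩

lemma exists_sharp_translation_bound (hp : 1 < p) (z : Fin d → ℤ) :
    ∃ S, ∃ w ∈ normalizedPHarmonic d p, (∀ x, w (x + z) = S * w x) ∧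
      ∀ u, IsPHarmonic d p u → (∀ x, 0 < u x) → ∀ x, u (x + z) ≤ S * u x := by
  obtain ⟨w, hw, hmax⟩ := (isCompact_normalizedPHarmonic hp).exists_isMaxOn
    ⟨fun _ => 1, fun x => by simp, fun _ => zero_le_one, rfl⟩ (continuous_apply z).continuousOn
  have hbound :
      ∀ u, IsPHarmonic d p u → (∀ x, 0 < u x) → ∀ x, u (x + z) ≤ w z * u x := by
    intro u hu hpos x
    have : (u x)⁻¹ * u (x + z) ≤ w z := hmax (normalize_mem_normalizedPHarmonic hu hpos x)
    rwa [inv_mul_le_iff₀ (hpos x), mul_comm] at this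
  refine ⟨w z, w, hw, fun x => ?_, hbound⟩
  have hwz : 0 < w z := pos_of_mem_normalizedPHarmonic hp hw z
  have hw_eq : w = fun x => (w z)⁻¹ * w (z + x) :=
    IsPHarmonic.eq_of_le_of_eq hp hw.1 ((hw.1.comp_add_left z).const_mul (inv_pos.mpr hwz))
      (fun x => by
        rw [inv_mul_le_iff₀ hwz, add_comm]
        exact hbound w hw.1 (pos_of_mem_normalizedPHarmonic hp hw) x)
      (by simp [hw.2.2, hwz.ne'])
  have := congrFun hw_eq x
  rw [this, add_comm, mul_inv_cancel_left₀ hwz.ne']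

end Normalized

section OneDim

variable {p : ℝ}

lemma monotone_of_signPow_sum_pos (hp : 1 < p) {g : ℤ → ℝ} (hg : ∀ n, 0 ≤ g n)
    (h : ∀ n, 0 < signPow p (g n - g (n + 1)) + signPow p (g n - g (n - 1))) :
    Monotone g := by
  have hflux : StrictMono fun n => signPow p (g n - g (n + 1)) :=
    strictMono_int_of_lt_succ fun n => by
      have := h (n + 1)
      rw [add_sub_cancel_right, ← neg_sub (g n), signPow_neg] at this
      linarith
  refine monotone_int_of_le_succ fun n₀ => ?_
  -- once `g` drops by `c > 0`, the increasing flux makes it drop by `c` at every later step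
  by_contra! hlt
  set c := g n₀ - g (n₀ + 1)
  have hstep : ∀ m : ℕ, c ≤ g (n₀ + m) - g (n₀ + m + 1) := fun m =>
    (signPow_strictMono hp).le_iff_le.mp (hflux.monotone (by omega))
  have hdesc : ∀ m : ℕ, g (n₀ + m) + m * c ≤ g n₀ := by
    intro m
    induction m with
    | zero => simp
    | succ m ih =>
      push_cast
      rw [← add_assoc]
      linarith [hstep m]
  obtain ⟨m, hm⟩ := exists_nat_gt (g n₀ / c)
  rw [div_lt_iff₀ (by linarith)] at hm
  linarith [hdesc m, hg (n₀ + m)]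

lemma not_forall_signPow_sum_pos (hp : 1 < p) {g : ℤ → ℝ} (hg : ∀ n, 0 ≤ g n) :
    ¬ ∀ n, 0 < signPow p (g n - g (n + 1)) + signPow p (g n - g (n - 1)) := by
  intro h
  have hmono := monotone_of_signPow_sum_pos hp hg h
  have hanti : Monotone fun n => g (-n) :=
    monotone_of_signPow_sum_pos hp (fun n => hg _) fun n => by
      rw [show -(n + 1) = -n - 1 by ring, show -(n - 1) = -n + 1 by ring, add_comm]
      exact h (-n)
  have h1 : g 1 = g 0 := le_antisymm (by simpa using hanti (show (-1 : ℤ) ≤ 0 by norm_num))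
    (hmono zero_le_one)
  have h2 : g (-1) = g 0 := le_antisymm (hmono (by norm_num))
    (by simpa using hanti (show (0 : ℤ) ≤ 1 by norm_num))
  simpa [h1, h2] using h 0

end OneDim

lemma sum_nbr_two (j : Fin (2 * 2)) : ∃ t, ∀ f : (Fin 2 → ℤ) → ℝ,
    ∑ k, f (nbr 2 k) = f (nbr 2 j) + f (-nbr 2 j) + (f t + f (-t)) := by
  have h2 : nbr 2 2 = -nbr 2 0 := by decide
  have h3 : nbr 2 3 = -nbr 2 1 := by decide
  refine ⟨nbr 2 (j + 1), fun f => ?_⟩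
  fin_cases j <;> simp [Fin.sum_univ_four, h2, h3] <;> ring

namespace IsPHarmonic

variable {p : ℝ} {u : (Fin 2 → ℤ) → ℝ}

lemma not_forall_lt_add_two (hp : 1 < p) (hu : IsPHarmonic 2 p u) (hnn : ∀ x, 0 ≤ u x)
    (j : Fin (2 * 2)) : ¬ ∀ x, 2 * u x < u (x + nbr 2 j) + u (x - nbr 2 j) := by
  intro hconv
  obtain ⟨t, ht⟩ := sum_nbr_two j
  refine not_forall_signPow_sum_pos hp (g := fun n : ℤ => u (n • t)) (fun n => hnn _)
    fun n => ?_
  set x := n • t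
  have hz := signPow_add_signPow_neg hp
    (show (u x - u (x + nbr 2 j)) + (u x - u (x - nbr 2 j)) < 0 by linarith [hconv x])
  have hsum := hu x
  rw [ht fun y => signPow p (u x - u (x + y))] at hsum
  simp only [add_zsmul, sub_zsmul, one_zsmul, ← sub_eq_add_neg] at hsum ⊢
  linarith

lemma le_of_pos_two (hp : 1 < p) (hu : IsPHarmonic 2 p u) (hpos : ∀ x, 0 < u x)
    (x : Fin 2 → ℤ) (j : Fin (2 * 2)) : u (x + nbr 2 j) ≤ u x := by
  obtain ⟨S, w, hw, hwS, hbound⟩ := exists_sharp_translation_bound hp (nbr 2 j)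
  suffices hS : S ≤ 1 by nlinarith [hbound u hu hpos x, hpos x]
  by_contra! hS
  refine hw.1.not_forall_lt_add_two hp hw.2.1 j fun x => ?_
  have hback : w x = S * w (x - nbr 2 j) := by rw [← hwS, sub_add_cancel]
  rw [hwS x, hback]
  nlinarith [mul_pos (pos_of_mem_normalizedPHarmonic hp hw (x - nbr 2 j))
    (mul_pos (sub_pos.2 hS) (sub_pos.2 hS))]

lemma eq_of_pos_two (hp : 1 < p) (hu : IsPHarmonic 2 p u) (hpos : ∀ x, 0 < u x)
    (x y : Fin 2 → ℤ) : u x = u y := by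
  have heq : ∀ x j, u (x + nbr 2 j) = u x := fun x j => by
    obtain ⟨j', hj'⟩ := exists_nbr_eq_neg j
    have := hu.le_of_pos_two hp hpos (x + nbr 2 j) j'
    rw [hj', add_neg_cancel_right] at this
    exact le_antisymm (hu.le_of_pos_two hp hpos x j) this
  have h0 : ∀ x, u x = u 0 := fun x => by
    induction x using nbr_induction with
    | zero => rfl
    | step x j ih => rw [heq, ih]
  rw [h0 x, h0 y]

end IsPHarmonic

/-- Strong Liouville property for discrete `p`-harmonic functions on `ℤ²`. -/
theorem liouville_pharmonic_Z2 (p : ℝ) (hp : 1 < p)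
    (u : (Fin 2 → ℤ) → ℝ) (hu : ∀ x, 0 ≤ u x)
    (hharm : ∀ x : Fin 2 → ℤ,
      ∑ j : Fin (2 * 2), signPow p (u x - u fun i => x i + nbr 2 j i) = 0) :
    ∀ x y : Fin 2 → ℤ, u x = u y := by
  intro x y
  have hv : IsPHarmonic 2 p fun z => u z + 1 := IsPHarmonic.add_const hharm 1
  simpa using hv.eq_of_pos_two hp (fun z => by linarith [hu z]) x y
end

section
/- Strong minimum principle: Let d ≥ 1, let F : ℝ^{2d} → ℝ be a weak averaging operator with ellipticity constant λ ∈ (0,1) and gauge functions η_1,…,η_{2d}, and let u : ℤ^d → ℝ be nonnegative and F-harmonic. If u(a) = 0 for some a ∈ ℤ^d, then u is identically 0 on ℤ^d. -/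
/-- A weak (isotropic) averaging operator with ellipticity constant `lam` and
gauge functions `η`. -/
structure IsWeakAvgOp (d : ℕ) (lam : ℝ) (η : Fin (2 * d) → ℝ → ℝ)
    (F : (Fin (2 * d) → ℝ) → ℝ) : Prop where
  map_zero : F (fun _ => 0) = 0
  map_one : F (fun _ => 1) = 1
  continuous : Continuous F
  mono : ∀ (t : Fin (2 * d) → ℝ) (i : Fin (2 * d)) (s : ℝ),
    t i ≤ s → F t ≤ F (Function.update t i s)
  add_const : ∀ (t : Fin (2 * d) → ℝ) (c : ℝ), F (fun i => t i + c) = c + F t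
  homog : ∀ (t : Fin (2 * d) → ℝ) (c : ℝ), F (fun i => c * t i) = c * F t
  perm : ∀ (t : Fin (2 * d) → ℝ) (σ : Equiv.Perm (Fin (2 * d))), F (t ∘ σ) = F t
  ellip : ∀ k : Fin (2 * d), lam ≤ F fun i => if i = k then 1 else 0
  gauge_cont : ∀ i, ContinuousOn (η i) (Set.Ici 0)
  gauge_mono : ∀ i, MonotoneOn (η i) (Set.Ici 0)
  gauge_zero : ∀ i, η i 0 = 0
  gauge_nonneg : ∀ i s, 0 ≤ s → 0 ≤ η i s
  gauge_bound : ∀ (t : Fin (2 * d) → ℝ) (i : Fin (2 * d)) (s : ℝ),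
    |F t - F (Function.update t i s)| ≤ η i |t i - s|

/-!
Ellipticity, homogeneity and monotonicity give `F t ≥ λ · t j` for every `t ≥ 0` and every
direction `j`. Applied at a zero `x` of the nonnegative harmonic function `u`, this forces `u`
to vanish at all neighbours of `x`. Hence the zero set of `u` is invariant under translation by
`±e_i`, which generate `ℤ^d`, so it is all of `ℤ^d`.
-/

open Function Pointwise

theorem monotone_of_le_update {ι α β : Type*} [Fintype ι] [DecidableEq ι] [Preorder α]
    [Preorder β] {F : (ι → α) → β} (hF : ∀ t i s, t i ≤ s → F t ≤ F (update t i s)) :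
    Monotone F := by
  intro s t hst
  have key : ∀ A : Finset ι, F s ≤ F (A.piecewise t s) := by
    intro A
    induction A using Finset.induction with
    | empty => simp
    | insert j A hj ih =>
      rw [Finset.piecewise_insert]
      exact ih.trans (hF _ j _ (by simpa [hj] using hst j))
  simpa using key Finset.univ

theorem Set.eq_univ_of_add_mem_iff_of_closure_eq_top {G : Type*} [AddGroup G] {g : Set G}
    (hg : AddSubgroup.closure g = ⊤) {S : Set G} (hS : S.Nonempty)
    (hinv : ∀ v ∈ g, ∀ z, v + z ∈ S ↔ z ∈ S) : S = univ := by
  have hstab : AddAction.stabilizer G S = ⊤ :=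
    top_le_iff.mp (hg ▸ (AddSubgroup.closure_le _).mpr
      fun v hv => AddAction.mem_stabilizer_set.mpr (hinv v hv))
  obtain ⟨a, ha⟩ := hS
  refine eq_univ_of_forall fun x => ?_
  have hx : x - a ∈ AddAction.stabilizer G S := hstab ▸ AddSubgroup.mem_top _
  simpa using (AddAction.mem_stabilizer_set.mp hx a).mpr ha

theorem AddSubgroup.closure_range_single_one {ι : Type*} [Fintype ι] [DecidableEq ι] :
    closure (Set.range fun i : ι => (Pi.single i 1 : ι → ℤ)) = ⊤ := by
  refine eq_top_iff.mpr fun y _ => ?_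
  rw [← Finset.univ_sum_single y]
  refine AddSubgroup.sum_mem _ fun i _ => ?_
  rw [show Pi.single i (y i) = y i • (Pi.single i 1 : ι → ℤ) by simp [← Pi.single_smul]]
  exact zsmul_mem (subset_closure (Set.mem_range_self i)) _

lemma nbr_eq_single {d : ℕ} (i : Fin d) : nbr d ⟨i, by omega⟩ = Pi.single i 1 := by
  ext k
  by_cases hk : k = i
  · subst hk; simp [nbr]
  · have : (i : ℕ) ≠ k := fun h => hk (Fin.ext h.symm)
    have : (i : ℕ) ≠ k + d := by omega
    simp [nbr, *]

lemma nbr_eq_neg_single {d : ℕ} (i : Fin d) : nbr d ⟨i + d, by omega⟩ = -Pi.single i 1 := by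
  ext k
  by_cases hk : k = i
  · subst hk; simp [nbr, k.pos.ne']
  · have : (i : ℕ) + d ≠ k := by omega
    have : (i : ℕ) ≠ k := fun h => hk (Fin.ext h.symm)
    simp [nbr, *]

theorem eq_univ_of_add_nbr_mem {d : ℕ} {S : Set (Fin d → ℤ)} (hS : S.Nonempty)
    (hadd : ∀ x ∈ S, ∀ j, x + nbr d j ∈ S) : S = Set.univ := by
  refine Set.eq_univ_of_add_mem_iff_of_closure_eq_top AddSubgroup.closure_range_single_one hS ?_
  rintro _ ⟨i, rfl⟩ z
  refine ⟨fun h => ?_, fun h => ?_⟩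
  · have := hadd _ h ⟨i + d, by omega⟩
    rwa [nbr_eq_neg_single, add_neg_cancel_comm] at this
  · have := hadd z h ⟨i, by omega⟩
    rwa [nbr_eq_single, add_comm] at this

namespace IsWeakAvgOp

variable {d : ℕ} {lam : ℝ} {η : Fin (2 * d) → ℝ → ℝ} {F : (Fin (2 * d) → ℝ) → ℝ}

theorem monotone (hF : IsWeakAvgOp d lam η F) : Monotone F :=
  monotone_of_le_update hF.mono

theorem mul_apply_le (hF : IsWeakAvgOp d lam η F) {t : Fin (2 * d) → ℝ} (ht : 0 ≤ t)
    (j : Fin (2 * d)) : lam * t j ≤ F t :=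
  calc lam * t j ≤ t j * F (fun i => if i = j then 1 else 0) := by
        rw [mul_comm]; exact mul_le_mul_of_nonneg_left (hF.ellip j) (ht j)
    _ = F (fun i => t j * if i = j then 1 else 0) := (hF.homog _ _).symm
    _ ≤ F t := hF.monotone fun i => by
        by_cases h : i = j
        · simp [h]
        · simpa [h] using ht i

theorem eq_zero_of_map_eq_zero (hF : IsWeakAvgOp d lam η F) (hlam : 0 < lam)
    {t : Fin (2 * d) → ℝ} (ht : 0 ≤ t) (h0 : F t = 0) : t = 0 :=
  funext fun j => le_antisymm
    (nonpos_of_mul_nonpos_right (h0 ▸ hF.mul_apply_le ht j) hlam) (ht j)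

end IsWeakAvgOp

theorem IsFHarmonic.add_nbr_eq_zero {d : ℕ} {lam : ℝ} {η : Fin (2 * d) → ℝ → ℝ}
    {F : (Fin (2 * d) → ℝ) → ℝ} (hF : IsWeakAvgOp d lam η F) (hlam : 0 < lam)
    {u : (Fin d → ℤ) → ℝ} (hu : 0 ≤ u) (hharm : IsFHarmonic d F u) {x : Fin d → ℤ}
    (hx : u x = 0) (j : Fin (2 * d)) : u (x + nbr d j) = 0 :=
  congrFun (hF.eq_zero_of_map_eq_zero (t := fun k => u (x + nbr d k)) hlam (fun _ => hu _)
    ((hharm x).symm.trans hx)) j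

theorem strong_minimum_principle_general (d : ℕ) (lam : ℝ) (hlam0 : 0 < lam)
    (η : Fin (2 * d) → ℝ → ℝ) (F : (Fin (2 * d) → ℝ) → ℝ)
    (hF : IsWeakAvgOp d lam η F)
    (u : (Fin d → ℤ) → ℝ) (hu : ∀ x, 0 ≤ u x) (hharm : IsFHarmonic d F u)
    (a : Fin d → ℤ) (ha : u a = 0) :
    ∀ x : Fin d → ℤ, u x = 0 := by
  have hzero : {x | u x = 0} = Set.univ :=
    eq_univ_of_add_nbr_mem ⟨a, ha⟩ fun _ hx => hharm.add_nbr_eq_zero hF hlam0 hu hx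
  exact Set.eq_univ_iff_forall.mp hzero

/-- Strong minimum principle: a nonnegative `F`-harmonic function vanishing at a
point vanishes identically. -/
theorem strong_minimum_principle (d : ℕ) (hd : 0 < d) (lam : ℝ) (hlam0 : 0 < lam)
    (hlam1 : lam < 1) (η : Fin (2 * d) → ℝ → ℝ) (F : (Fin (2 * d) → ℝ) → ℝ)
    (hF : IsWeakAvgOp d lam η F)
    (u : (Fin d → ℤ) → ℝ) (hu : ∀ x, 0 ≤ u x) (hharm : IsFHarmonic d F u)
    (a : Fin d → ℤ) (ha : u a = 0) :
    ∀ x : Fin d → ℤ, u x = 0 :=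
  strong_minimum_principle_general d lam hlam0 η F hF u hu hharm a ha
end

section
/- Property (vi) fails for the discrete p-laplacian in dimension d = 3 when p > 2: Let p > 2 and let Γ satisfy 1 < Γ < (2 − 3^{2−p})^{1/(p−1)}. Set t = ((Γ−1)/3^{1/(p−1)})·(2·Γ^{1−p} − 1)^{1/(p−1)}. Then Γ^{-1} ≤ 1 + t ≤ Γ, F_p(Γ, Γ^{-1}, Γ^{-1}, 1+t, 1+t, 1+t) = 1 (i.e. sign(1−Γ)·|1−Γ|^{p−1} + 2·sign(1−Γ^{-1})·|1−Γ^{-1}|^{p−1} − 3·t^{p−1} = 0), and (Γ^{-1} + 3(1+t))/4 > 1. -/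
/-!
Write `q = p - 1` and `G = Γ^q`. Both `1 - Γ` and `1 - Γ⁻¹ = (Γ - 1)/Γ` have `|·|^q` a multiple of
`(Γ - 1)^q`, so the balance equation forces `3 t^q = (Γ - 1)^q (2/G - 1)`, which is the given `t`.
Since `x ↦ x^q` is strictly increasing, the average exceeds `1` iff `(1 - Γ⁻¹)^q < (3t)^q`, i.e.
`3 < 3^q (2 - G)`, which is exactly the hypothesis `G < 2 - 3^(1-q)`.
-/

lemma signPow_of_pos (p : ℝ) {s : ℝ} (hs : 0 < s) : signPow p s = s ^ (p - 1) := by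
  rw [signPow, Real.sign_of_pos hs, abs_of_pos hs, one_mul]

lemma signPow_of_neg (p : ℝ) {s : ℝ} (hs : s < 0) : signPow p s = -(-s) ^ (p - 1) := by
  rw [signPow, Real.sign_of_neg hs, abs_of_neg hs, neg_one_mul]

/-- The `t` of the statement, written with `q = p - 1`: the shift for which `1` is the
`p`-average of `Γ, Γ⁻¹, Γ⁻¹, 1 + t, 1 + t, 1 + t`. -/
noncomputable def balancingShift (q Γ : ℝ) : ℝ := (Γ - 1) * ((2 / Γ ^ q - 1) / 3) ^ q⁻¹

section balancingShift

variable {q Γ : ℝ}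

lemma balancingShift_pos (hΓ : 1 < Γ) (hΓq : Γ ^ q < 2) : 0 < balancingShift q Γ := by
  have hG : 0 < Γ ^ q := Real.rpow_pos_of_pos (by linarith) q
  have : 1 < 2 / Γ ^ q := by rw [lt_div_iff₀ hG]; linarith
  exact mul_pos (by linarith) (Real.rpow_pos_of_pos (by linarith) _)

lemma balancingShift_le (hq : 0 ≤ q) (hΓ : 1 ≤ Γ) (hΓq : Γ ^ q ≤ 2) :
    balancingShift q Γ ≤ Γ - 1 := by
  have hG : 1 ≤ Γ ^ q := Real.one_le_rpow hΓ hq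
  have h2G : 2 / Γ ^ q ≤ 2 := div_le_self zero_le_two hG
  have h1G : 1 ≤ 2 / Γ ^ q := by rw [le_div_iff₀ (by linarith)]; linarith
  exact mul_le_of_le_one_right (by linarith)
    (Real.rpow_le_one (by linarith) (by linarith) (inv_nonneg.mpr hq))

lemma balancingShift_rpow (hq : q ≠ 0) (hΓ : 1 ≤ Γ) (hΓq : Γ ^ q ≤ 2) :
    balancingShift q Γ ^ q = (Γ - 1) ^ q * ((2 / Γ ^ q - 1) / 3) := by
  have hG : 0 < Γ ^ q := Real.rpow_pos_of_pos (by linarith) q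
  have hA : 0 ≤ (2 / Γ ^ q - 1) / 3 := by
    have : 1 ≤ 2 / Γ ^ q := by rw [le_div_iff₀ hG]; linarith
    linarith
  rw [balancingShift, Real.mul_rpow (by linarith) (Real.rpow_nonneg hA _),
    Real.rpow_inv_rpow hA hq]

lemma signPow_balance {p : ℝ} (hp : 1 < p) (hΓ : 1 < Γ) (hΓq : Γ ^ (p - 1) ≤ 2) :
    signPow p (1 - Γ) + 2 * signPow p (1 - Γ⁻¹) - 3 * balancingShift (p - 1) Γ ^ (p - 1) = 0 := by
  have hΓ0 : 0 < Γ := by linarith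
  have hG : 0 < Γ ^ (p - 1) := Real.rpow_pos_of_pos hΓ0 _
  have hΓinv : 1 - Γ⁻¹ = (Γ - 1) / Γ := by field_simp
  rw [signPow_of_neg p (by linarith), signPow_of_pos p (by rw [hΓinv]; positivity), hΓinv,
    Real.div_rpow (by linarith) hΓ0.le, balancingShift_rpow (by linarith) hΓ.le hΓq, neg_sub]
  field_simp
  ring

lemma one_sub_inv_lt_three_mul_balancingShift (hq : 0 < q) (hΓ : 1 < Γ)
    (hΓq : Γ ^ q < 2 - 3 ^ (1 - q)) : 1 - Γ⁻¹ < 3 * balancingShift q Γ := by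
  have hΓ0 : 0 < Γ := by linarith
  have hG : 0 < Γ ^ q := Real.rpow_pos_of_pos hΓ0 q
  have hD : 0 < (Γ - 1) ^ q := Real.rpow_pos_of_pos (by linarith) q
  have h3 : 0 < (3 : ℝ) ^ q := by positivity
  have hΓq2 : Γ ^ q < 2 := by linarith [Real.rpow_pos_of_pos three_pos (1 - q)]
  have hΓinv : 1 - Γ⁻¹ = (Γ - 1) / Γ := by field_simp
  have key : 3 < 3 ^ q * (2 - Γ ^ q) := by
    have : (3 : ℝ) ^ (1 - q) * 3 ^ q = 3 := by
      rw [← Real.rpow_add three_pos, sub_add_cancel, Real.rpow_one]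
    nlinarith
  have ht := balancingShift_pos hΓ hΓq2
  rw [← Real.rpow_lt_rpow_iff (by rw [hΓinv]; positivity) (by positivity) hq,
    Real.mul_rpow zero_le_three ht.le, balancingShift_rpow hq.ne' hΓ.le hΓq2.le,
    hΓinv, Real.div_rpow (by linarith) hΓ0.le, div_lt_iff₀ hG]
  field_simp
  nlinarith [mul_pos hD h3]

end balancingShift

/-- Property (vi) fails for the discrete `p`-laplacian in dimension `d = 3` when `p > 2`. -/
theorem property_vi_fails_plaplacian_d3 (p : ℝ) (hp : 2 < p) (Γ : ℝ) (hΓ1 : 1 < Γ)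
    (hΓ2 : Γ < (2 - 3 ^ ((2 : ℝ) - p)) ^ ((1 : ℝ) / (p - 1))) :
    let t : ℝ := ((Γ - 1) / 3 ^ ((1 : ℝ) / (p - 1))) *
      (2 * Γ ^ ((1 : ℝ) - p) - 1) ^ ((1 : ℝ) / (p - 1))
    Γ⁻¹ ≤ 1 + t ∧ 1 + t ≤ Γ ∧
      signPow p (1 - Γ) + 2 * signPow p (1 - Γ⁻¹) - 3 * t ^ (p - 1) = 0 ∧
      1 < (Γ⁻¹ + 3 * (1 + t)) / 4 := by
  intro t
  have hq : 0 < p - 1 := by linarith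
  have hB : 0 ≤ 2 - (3 : ℝ) ^ (2 - p) := by
    linarith [Real.rpow_lt_one_of_one_lt_of_neg (x := 3) (by norm_num) (by linarith : 2 - p < 0)]
  have hΓq : Γ ^ (p - 1) < 2 - 3 ^ (1 - (p - 1)) := by
    rw [show 1 - (p - 1) = 2 - p by ring]
    exact (Real.lt_rpow_inv_iff_of_pos (by linarith) hB hq).mp (by rwa [← one_div])
  have hΓq2 : Γ ^ (p - 1) < 2 := by linarith [Real.rpow_pos_of_pos three_pos (1 - (p - 1))]
  have ht : t = balancingShift (p - 1) Γ := by
    have hA : 0 ≤ 2 / Γ ^ (p - 1) - 1 := by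
      rw [sub_nonneg, le_div_iff₀ (Real.rpow_pos_of_pos (by linarith) _)]; linarith
    simp only [t]
    rw [balancingShift, Real.div_rpow hA zero_le_three, show (1 : ℝ) - p = -(p - 1) by ring,
      Real.rpow_neg (by linarith), ← div_eq_mul_inv, ← one_div]
    ring
  have hΓinv : Γ⁻¹ < 1 := inv_lt_one_of_one_lt₀ hΓ1
  have hshift := one_sub_inv_lt_three_mul_balancingShift hq hΓ1 hΓq
  rw [ht]
  refine ⟨?_, ?_, signPow_balance (by linarith) hΓ1 hΓq2.le, by linarith⟩
  · linarith [balancingShift_pos hΓ1 hΓq2]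
  · linarith [balancingShift_le hq.le hΓ1.le hΓq2.le]
end
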